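/- For all natural numbers d and N with N ≥ d, the coefficient of X^d in the formal power series (Σ_{e ≥ 0} B_e·X^e) · ∏_{i=1}^{N} (1 − X^i) in ℤ⟦X⟧ is nonnegative, where B_e is the e-th Bell number (the number of set partitions of Fin e). -/

import Mathlib

/-- A set partition of `Fin e`. -/
def IsSetPartition {e : ℕ} (P : Finset (Finset (Fin e))) : Prop :=
  ∅ ∉ P ∧ ∀ i : Fin e, ∃! B, B ∈ P ∧ i ∈ B

/-- `B_e`: the Bell number, i.e. the total number of set partitions of `Fin e`
(`B_0 = 1`). -/
noncomputable def bell (e : ℕ) : ℕ :=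
  Nat.card {P : Finset (Finset (Fin e)) // IsSetPartition P}

open Finset PowerSeries

/-- Set partitions of `{0, ..., m-1}` as finsets of finsets of naturals. -/
def NPart (m : ℕ) (P : Finset (Finset ℕ)) : Prop :=
  (∀ B ∈ P, B ⊆ range m) ∧ ∅ ∉ P ∧ ∀ i < m, ∃! B, B ∈ P ∧ i ∈ B

open Classical in
noncomputable def npart (m : ℕ) : Finset (Finset (Finset ℕ)) :=
  ((range m).powerset.powerset).filter (NPart m)

lemma mem_npart {m : ℕ} {P : Finset (Finset ℕ)} : P ∈ npart m ↔ NPart m P := by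
  classical
  simp only [npart, mem_filter, mem_powerset, and_iff_right_iff_imp]
  intro hP
  intro B hB
  simpa using hP.1 B hB

lemma bell_eq (m : ℕ) : bell m = (npart m).card := by
  classical
  rw [bell, Nat.card_eq_fintype_card, Fintype.card_subtype]
  refine card_bij' (fun P _ => P.image (fun B => B.image Fin.val))
    (fun P _ => P.image (fun B => (univ.filter (fun i : Fin m => (i : ℕ) ∈ B))))
    ?_ ?_ ?_ ?_
  · -- maps to npart
    intro P hP
    rw [mem_filter] at hP
    obtain ⟨-, hP0, hPu⟩ := hP
    rw [mem_npart]
    refine ⟨?_, ?_, ?_⟩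
    · intro B hB
      simp only [mem_image] at hB
      obtain ⟨C, -, rfl⟩ := hB
      intro n hn
      simp only [mem_image] at hn
      obtain ⟨i, -, rfl⟩ := hn
      simpa using i.isLt
    · intro h
      simp only [mem_image] at h
      obtain ⟨C, hC, hCe⟩ := h
      have : C = ∅ := Finset.image_eq_empty.mp hCe
      exact hP0 (this ▸ hC)
    · intro i hi
      obtain ⟨B, ⟨hB, hiB⟩, hBu⟩ := hPu ⟨i, hi⟩
      refine ⟨B.image Fin.val, ⟨mem_image_of_mem _ hB, mem_image_of_mem _ hiB⟩, ?_⟩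
      rintro C' ⟨hC', hiC'⟩
      simp only [mem_image] at hC'
      obtain ⟨C, hC, rfl⟩ := hC'
      simp only [mem_image] at hiC'
      obtain ⟨x, hx, hxv⟩ := hiC'
      have : x = ⟨i, hi⟩ := Fin.ext hxv
      subst this
      rw [hBu C ⟨hC, hx⟩]
  · -- maps back
    intro P hP
    rw [mem_npart] at hP
    obtain ⟨hPr, hP0, hPu⟩ := hP
    rw [mem_filter]
    refine ⟨mem_univ _, ?_, ?_⟩
    · intro h
      simp only [mem_image] at h
      obtain ⟨B, hB, hBe⟩ := h
      have hBne : B.Nonempty := by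
        rcases B.eq_empty_or_nonempty with rfl | h; · exact absurd hB hP0
        · exact h
      obtain ⟨n, hn⟩ := hBne
      have hnm : n < m := by simpa using hPr B hB hn
      have : (⟨n, hnm⟩ : Fin m) ∈ (∅ : Finset (Fin m)) := by
        rw [← hBe]; simp [hn]
      simp at this
    · intro i
      obtain ⟨B, ⟨hB, hiB⟩, hBu⟩ := hPu i.val i.isLt
      refine ⟨univ.filter (fun j : Fin m => (j : ℕ) ∈ B),
        ⟨mem_image_of_mem _ hB, by simp [hiB]⟩, ?_⟩
      rintro C' ⟨hC', hiC'⟩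
      simp only [mem_image] at hC'
      obtain ⟨C, hC, rfl⟩ := hC'
      simp only [mem_filter] at hiC'
      rw [hBu C ⟨hC, hiC'.2⟩]
  · -- left inverse
    intro P hP
    show Finset.image _ (Finset.image _ P) = P
    rw [Finset.image_image]
    have : ∀ B ∈ P, (Function.comp (fun B => (univ.filter (fun i : Fin m => (i : ℕ) ∈ B)))
        (fun B : Finset (Fin m) => B.image Fin.val)) B = B := by
      intro B hB
      ext i
      simp [Fin.val_inj]
    rw [Finset.image_congr (fun B hB => this B hB)]
    simp
  · -- right inverse
    intro P hP
    rw [mem_npart] at hP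
    show Finset.image _ (Finset.image _ P) = P
    rw [Finset.image_image]
    have : ∀ B ∈ P, (Function.comp (fun B : Finset (Fin m) => B.image Fin.val)
        (fun B => (univ.filter (fun i : Fin m => (i : ℕ) ∈ B)))) B = B := by
      intro B hB
      ext n
      simp only [Function.comp_apply, mem_image, mem_filter, mem_univ, true_and]
      constructor
      · rintro ⟨i, hi, rfl⟩; exact hi
      · intro hn
        have : n < m := by simpa using hP.1 B hB hn
        exact ⟨⟨n, this⟩, hn, rfl⟩
    rw [Finset.image_congr (fun B hB => this B hB)]
    simp


lemma ico_not_mem {m m' : ℕ} (hm : m < m') {P : Finset (Finset ℕ)}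
    (hP : P ∈ npart m) : Ico m m' ∉ P := by
  intro h
  have := (mem_npart.mp hP).1 _ h (by simp [hm] : m ∈ Ico m m')
  simp at this

lemma npart_push {m m' : ℕ} (hm : m < m') {P : Finset (Finset ℕ)}
    (hP : P ∈ npart m) : insert (Ico m m') P ∈ npart m' := by
  obtain ⟨hr, h0, hu⟩ := mem_npart.mp hP
  rw [mem_npart]
  refine ⟨?_, ?_, ?_⟩
  · intro B hB
    rcases mem_insert.mp hB with rfl | hB
    · intro x hx; simp only [mem_Ico] at hx; simp [hx.2]
    · exact (hr B hB).trans (Finset.range_subset_range.mpr hm.le)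
  · intro h
    rcases mem_insert.mp h with he | he
    · exact (Finset.nonempty_Ico.mpr hm).ne_empty he.symm
    · exact h0 he
  · intro i hi
    by_cases him : i < m
    · obtain ⟨B, ⟨hB, hiB⟩, hBu⟩ := hu i him
      refine ⟨B, ⟨mem_insert_of_mem hB, hiB⟩, ?_⟩
      rintro C ⟨hC, hiC⟩
      rcases mem_insert.mp hC with rfl | hC
      · exact absurd (mem_Ico.mp hiC).1 (by omega)
      · exact hBu C ⟨hC, hiC⟩
    · refine ⟨Ico m m', ⟨mem_insert_self _ _, mem_Ico.mpr ⟨by omega, hi⟩⟩, ?_⟩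
      rintro C ⟨hC, hiC⟩
      rcases mem_insert.mp hC with rfl | hC
      · rfl
      · exact absurd (by simpa using hr C hC hiC) him

lemma key_ineq (d N : ℕ) :
    ∑ T ∈ (Icc 1 N).powerset.filter (fun T => (∑ i ∈ T, i) ≤ d ∧ ¬ Even T.card),
      bell (d - ∑ i ∈ T, i)
    ≤ ∑ T ∈ (Icc 1 N).powerset.filter (fun T => (∑ i ∈ T, i) ≤ d ∧ Even T.card),
      bell (d - ∑ i ∈ T, i) := by
  classical
  simp only [bell_eq]
  rw [← card_sigma, ← card_sigma]
  set F : (Σ _ : Finset ℕ, Finset (Finset ℕ)) → (Σ _ : Finset ℕ, Finset (Finset ℕ)) :=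
    fun x => if h : x.1.Nonempty then
      ⟨x.1.erase (x.1.min' h),
        insert (Ico (d - ∑ i ∈ x.1, i) (d - ∑ i ∈ x.1.erase (x.1.min' h), i)) x.2⟩
    else x with hF
  -- basic facts extractor
  have fact : ∀ T : Finset ℕ, ∀ P, (⟨T, P⟩ : Σ _ : Finset ℕ, Finset (Finset ℕ)) ∈
      ((Icc 1 N).powerset.filter (fun T => (∑ i ∈ T, i) ≤ d ∧ ¬ Even T.card)).sigma
        (fun T => npart (d - ∑ i ∈ T, i)) →
      ∃ h : T.Nonempty,
        (∑ i ∈ T.erase (T.min' h), i) = (∑ i ∈ T, i) - T.min' h ∧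
        1 ≤ T.min' h ∧ T.min' h ≤ ∑ i ∈ T, i ∧ (∑ i ∈ T, i) ≤ d ∧
        d - ∑ i ∈ T, i < d - ∑ i ∈ T.erase (T.min' h), i ∧ ¬ Even T.card ∧
        T ⊆ Icc 1 N ∧ P ∈ npart (d - ∑ i ∈ T, i) := by
    intro T P hx
    rw [mem_sigma, mem_filter, mem_powerset] at hx
    dsimp only at hx
    obtain ⟨⟨hTsub, hTd, hTodd⟩, hPmem⟩ := hx
    have hne : T.Nonempty := by
      rcases T.eq_empty_or_nonempty with rfl | h
      · simp at hTodd
      · exact h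
    have hmin : T.min' hne ∈ T := T.min'_mem hne
    have h1 : 1 ≤ T.min' hne := (mem_Icc.mp (hTsub hmin)).1
    have hle : T.min' hne ≤ ∑ i ∈ T, i :=
      Finset.single_le_sum (fun i _ => Nat.zero_le i) hmin
    have hservices : (∑ i ∈ T.erase (T.min' hne), i) + T.min' hne = ∑ i ∈ T, i :=
      Finset.sum_erase_add T _ hmin
    exact ⟨hne, by omega, h1, hle, hTd, by omega, hTodd, hTsub, hPmem⟩
  apply card_le_card_of_injOn F
  · rintro ⟨T, P⟩ hx
    obtain ⟨hne, hσ, h1, hle, hTd, hmm, hTodd, hTsub, hPmem⟩ := fact T P hx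
    have hFx : F ⟨T, P⟩ = ⟨T.erase (T.min' hne),
        insert (Ico (d - ∑ i ∈ T, i) (d - ∑ i ∈ T.erase (T.min' hne), i)) P⟩ := by
      rw [hF]; exact dif_pos hne
    rw [hFx, Finset.mem_coe, mem_sigma, mem_filter, mem_powerset]
    dsimp only
    refine ⟨⟨(T.erase_subset _).trans hTsub, by omega, ?_⟩, ?_⟩
    · rw [Finset.card_erase_of_mem (T.min'_mem hne)]
      have : Odd T.card := Nat.not_even_iff_odd.mp hTodd
      exact Nat.Odd.sub_odd this odd_one
    · exact npart_push hmm hPmem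
  · rintro ⟨T₁, P₁⟩ hx ⟨T₂, P₂⟩ hy hxy
    obtain ⟨hne₁, hσ₁, h1₁, hle₁, hTd₁, hmm₁, -, -, hP₁⟩ := fact T₁ P₁ (by simpa using hx)
    obtain ⟨hne₂, hσ₂, h1₂, hle₂, hTd₂, hmm₂, -, -, hP₂⟩ := fact T₂ P₂ (by simpa using hy)
    have hFx : F ⟨T₁, P₁⟩ = ⟨T₁.erase (T₁.min' hne₁),
        insert (Ico (d - ∑ i ∈ T₁, i) (d - ∑ i ∈ T₁.erase (T₁.min' hne₁), i)) P₁⟩ := by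
      rw [hF]; exact dif_pos hne₁
    have hFy : F ⟨T₂, P₂⟩ = ⟨T₂.erase (T₂.min' hne₂),
        insert (Ico (d - ∑ i ∈ T₂, i) (d - ∑ i ∈ T₂.erase (T₂.min' hne₂), i)) P₂⟩ := by
      rw [hF]; exact dif_pos hne₂
    rw [hFx, hFy, Sigma.ext_iff] at hxy
    obtain ⟨hT, hP'⟩ := hxy
    dsimp only at hT hP'
    have hK2 : (d - ∑ i ∈ T₂.erase (T₂.min' hne₂), i)
        = (d - ∑ i ∈ T₁.erase (T₁.min' hne₁), i) := by rw [hT]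
    have hP := eq_of_heq hP'
    rw [hK2] at hP hmm₂
    have hse : (∑ i ∈ T₁.erase (T₁.min' hne₁), i) = ∑ i ∈ T₂.erase (T₂.min' hne₂), i := by
      rw [hT]
    -- show the prefix sizes agree
    have hm12 : d - ∑ i ∈ T₁, i = d - ∑ i ∈ T₂, i := by
      set K := d - ∑ i ∈ T₁.erase (T₁.min' hne₁), i
      set m₁ := d - ∑ i ∈ T₁, i
      set m₂ := d - ∑ i ∈ T₂, i
      have hmem : Ico m₁ K ∈ insert (Ico m₂ K) P₂ := by
        rw [← hP]; exact mem_insert_self _ _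
      rcases mem_insert.mp hmem with he | hmem'
      · have e1 : m₁ ∈ Ico m₂ K := he ▸ mem_Ico.mpr ⟨le_refl _, hmm₁⟩
        have e2 : m₂ ∈ Ico m₁ K := he ▸ mem_Ico.mpr ⟨le_refl _, hmm₂⟩
        have := (mem_Ico.mp e1).1
        have := (mem_Ico.mp e2).1
        omega
      · exfalso
        have hKm : K - 1 ∈ Ico m₁ K := mem_Ico.mpr ⟨by omega, by omega⟩
        have := (mem_npart.mp hP₂).1 _ hmem' hKm
        rw [mem_range] at this
        omega
    have hs : T₁.min' hne₁ = T₂.min' hne₂ := by omega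
    have hTT : T₁ = T₂ := by
      rw [← Finset.insert_erase (T₁.min'_mem hne₁), ← Finset.insert_erase (T₂.min'_mem hne₂),
        hT, hs]
    have hPP : P₁ = P₂ := by
      have n1 : Ico (d - ∑ i ∈ T₁, i) (d - ∑ i ∈ T₁.erase (T₁.min' hne₁), i) ∉ P₁ :=
        ico_not_mem hmm₁ hP₁
      have n2 : Ico (d - ∑ i ∈ T₂, i) (d - ∑ i ∈ T₁.erase (T₁.min' hne₁), i) ∉ P₂ :=
        ico_not_mem hmm₂ hP₂
      rw [hm12] at hP n1
      rw [← Finset.erase_insert n1, ← Finset.erase_insert n2, hP]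
    exact Sigma.ext hTT (heq_of_eq hPP)

/-- For `N ≥ d`, the coefficient of `X^d` in
`(Σ_{e ≥ 0} B_e·X^e) · ∏_{i=1}^{N} (1 − X^i)` in `ℤ⟦X⟧` is nonnegative. -/
theorem stmt4 (d N : ℕ) (h : d ≤ N) :
    0 ≤ PowerSeries.coeff d
      ((PowerSeries.mk fun e => (bell e : ℤ)) *
        ∏ i ∈ Finset.Icc 1 N, (1 - PowerSeries.X ^ i)) := by
  classical
  have hprod : (∏ i ∈ Icc 1 N, (1 - X ^ i : ℤ⟦X⟧))
      = ∑ T ∈ (Icc 1 N).powerset, (-1 : ℤ⟦X⟧) ^ T.card * X ^ (∑ i ∈ T, i) := by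
    calc ∏ i ∈ Icc 1 N, (1 - X ^ i : ℤ⟦X⟧) = ∏ i ∈ Icc 1 N, ((-X ^ i) + 1) := by
          refine Finset.prod_congr rfl fun i _ => by ring
      _ = ∑ T ∈ (Icc 1 N).powerset, (∏ i ∈ T, -X ^ i) * ∏ i ∈ (Icc 1 N) \ T, (1 : ℤ⟦X⟧) :=
          Finset.prod_add _ _ _
      _ = ∑ T ∈ (Icc 1 N).powerset, (-1 : ℤ⟦X⟧) ^ T.card * X ^ (∑ i ∈ T, i) := by
          refine Finset.sum_congr rfl fun T hT => ?_
          rw [Finset.prod_const_one, mul_one]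
          calc ∏ i ∈ T, -(X : ℤ⟦X⟧) ^ i = ∏ i ∈ T, (-1) * X ^ i := by
                refine Finset.prod_congr rfl fun i _ => by ring
            _ = (∏ _i ∈ T, (-1 : ℤ⟦X⟧)) * ∏ i ∈ T, X ^ i := Finset.prod_mul_distrib
            _ = (-1 : ℤ⟦X⟧) ^ T.card * X ^ (∑ i ∈ T, i) := by
                rw [Finset.prod_const, Finset.prod_pow_eq_pow_sum]
  rw [hprod, mul_sum, map_sum]
  have hterm : ∀ T ∈ (Icc 1 N).powerset,
      coeff d ((PowerSeries.mk fun e => (bell e : ℤ)) * ((-1 : ℤ⟦X⟧) ^ T.card * X ^ (∑ i ∈ T, i)))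
      = (-1 : ℤ) ^ T.card *
        (if (∑ i ∈ T, i) ≤ d then (bell (d - ∑ i ∈ T, i) : ℤ) else 0) := by
    intro T _
    have hC : ((PowerSeries.mk fun e => (bell e : ℤ)) * ((-1 : ℤ⟦X⟧) ^ T.card * X ^ (∑ i ∈ T, i)))
        = PowerSeries.C ((-1 : ℤ) ^ T.card) * ((PowerSeries.mk fun e => (bell e : ℤ)) * X ^ (∑ i ∈ T, i)) := by
      have hCpow : (PowerSeries.C) ((-1 : ℤ) ^ T.card) = (-1 : ℤ⟦X⟧) ^ T.card := by
        rw [map_pow, map_neg, map_one]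
      rw [hCpow, mul_left_comm]
    rw [hC, PowerSeries.coeff_C_mul, PowerSeries.coeff_mul_X_pow']
    by_cases hle : (∑ i ∈ T, i) ≤ d
    · rw [if_pos hle, if_pos hle, PowerSeries.coeff_mk]
    · rw [if_neg hle, if_neg hle]
  rw [Finset.sum_congr rfl hterm]
  have step : ∀ T : Finset ℕ,
      (-1 : ℤ) ^ T.card * (if (∑ i ∈ T, i) ≤ d then (bell (d - ∑ i ∈ T, i) : ℤ) else 0)
      = (if (∑ i ∈ T, i) ≤ d ∧ Even T.card then (bell (d - ∑ i ∈ T, i) : ℤ) else 0)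
        - (if (∑ i ∈ T, i) ≤ d ∧ ¬ Even T.card then (bell (d - ∑ i ∈ T, i) : ℤ) else 0) := by
    intro T
    by_cases h1 : (∑ i ∈ T, i) ≤ d <;> by_cases h2 : Even T.card
    · simp [h1, h2, h2.neg_one_pow]
    · simp [h1, h2, (Nat.not_even_iff_odd.mp h2).neg_one_pow]
    · simp [h1]
    · simp [h1]
  rw [Finset.sum_congr rfl (fun T _ => step T), Finset.sum_sub_distrib,
    ← Finset.sum_filter, ← Finset.sum_filter, sub_nonneg]
  exact_mod_cast key_ineq d N
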